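/- arXiv:2308.16545 — 10 statements merged into one kernel-verified Lean document; each statement's English description precedes it below -/
import Mathlib

section
/- Theorem 1 (solvability of the distributed nonblocking networked supervisory control problem). Assume every event of E lies in Σc ∪ Σuc ∪ Σfg and that LH is communication-closed. Then the following are equivalent: (1) the specification is network controllable, network jointly observable, and LH is LmG-closed; (2) the canonical supervisor set γ* is admissible, L(γ*) = LH, and Lm(γ*) = LmH. -/
universe u v

variable {E : Type u} {A : Type v}

/-- A language is prefix-closed. -/
def IsPrefixClosed (L : Set (List E)) : Prop :=
  ∀ s ∈ L, ∀ t : List E, t <+: s → t ∈ L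

/-- The closed-loop language `L(γ)` of a supervisor set `γ = (S_i)_{i ∈ A}`:
`ε ∈ L(γ)`, and for `μ ∈ L(γ)` and `e ∈ E`, `μe ∈ L(γ)` iff `μe ∈ LG` and
(`e ∈ Sc` implies `e ∈ S_i(P_i(μ))` for every `i ∈ Ac(e)`). -/
inductive InCL (LG : Set (List E)) (Sc : Set E) (Ac : E → Set A)
    (P : A → List E → List E) (γ : A → List E → Set E) : List E → Prop
  | nil : InCL LG Sc Ac P γ []
  | snoc {μ : List E} {e : E} :
      InCL LG Sc Ac P γ μ → μ ++ [e] ∈ LG →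
      (e ∈ Sc → ∀ i ∈ Ac e, e ∈ γ i (P i μ)) →
      InCL LG Sc Ac P γ (μ ++ [e])

/-- The canonical supervisor set `γ* = (S*_i)`:
`S*_i(t) = Suc_i ∪ (Sc_i \ {σ ∈ Sc_i : ∃ μ ∈ LH, μσ ∈ LG \ LH ∧ P_i(μ) = t})`. -/
def Sstar (LG LH : Set (List E)) (Sc : Set E) (Ac : E → Set A)
    (Suci : A → Set E) (P : A → List E → List E) (i : A) (t : List E) : Set E :=
  Suci i ∪
    ({σ | σ ∈ Sc ∧ i ∈ Ac σ} \
      {σ | σ ∈ Sc ∧ i ∈ Ac σ ∧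
        ∃ μ ∈ LH, μ ++ [σ] ∈ LG ∧ μ ++ [σ] ∉ LH ∧ P i μ = t})

/-- Admissibility of a supervisor set `γ = (S_i)`: for every `i ∈ A` and `μ ∈ LH`,
(i) `Suc_i ⊆ S_i(P_i(μ))`, and (ii) if no `σ ∈ Sfor` satisfies `μσ ∈ LH` and
`μ·tick ∈ LG`, then `tick ∈ S_i(P_i(μ))`. -/
def Admissible (LG LH : Set (List E)) (Suci : A → Set E) (Sfor : Set E)
    (tick : E) (P : A → List E → List E) (γ : A → List E → Set E) : Prop :=
  ∀ i : A, ∀ μ ∈ LH,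
    Suci i ⊆ γ i (P i μ) ∧
    ((¬ ∃ σ ∈ Sfor, μ ++ [σ] ∈ LH) → μ ++ [tick] ∈ LG → tick ∈ γ i (P i μ))

/-- Network controllability of the specification. -/
def NetworkControllable (LG LH : Set (List E)) (Suc Sfor : Set E) (tick : E) : Prop :=
  (∀ μ ∈ LH, ∀ σ ∈ Suc, μ ++ [σ] ∈ LG → μ ++ [σ] ∈ LH) ∧
  (∀ μ ∈ LH, μ ++ [tick] ∈ LG → μ ++ [tick] ∉ LH → ∃ σ ∈ Sfor, μ ++ [σ] ∈ LH)

/-- Network joint observability of the specification. -/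
def NetworkJointlyObservable (LG LH : Set (List E)) (Sc : Set E) (Ac : E → Set A)
    (P : A → List E → List E) : Prop :=
  ∀ μ ∈ LH, ∀ σ ∈ Sc, μ ++ [σ] ∈ LG → μ ++ [σ] ∉ LH →
    ∀ i ∈ Ac σ, ∀ ν : List E, ν ++ [σ] ∈ LH → P i μ ≠ P i ν

/-- `LH` is communication-closed with respect to the bookkeeping events `Sfg`. -/
def CommClosed (LG LH : Set (List E)) (Sfg : Set E) : Prop :=
  ∀ μ ∈ LH, ∀ e ∈ Sfg, μ ++ [e] ∈ LG → μ ++ [e] ∈ LH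

lemma InCL_snoc_inv {LG : Set (List E)} {Sc : Set E} {Ac : E → Set A}
    {P : A → List E → List E} {γ : A → List E → Set E} {μ : List E}
    (h : InCL LG Sc Ac P γ μ) :
    ∀ ν σ, μ = ν ++ [σ] → σ ∈ Sc → ∀ i ∈ Ac σ, σ ∈ γ i (P i ν) := by
  cases h with
  | nil => intro ν σ h; exact absurd h (by simp)
  | @snoc μ' e h hG hctl =>
    intro ν σ heq hσ i hi
    obtain ⟨h1, h2⟩ := List.append_inj' heq rfl
    obtain rfl : e = σ := by simpa using h2
    obtain rfl := h1
    exact hctl hσ i hi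

/-- Theorem 1 (solvability of the DNNSCP). -/
theorem dnnscp_solvable_iff [Fintype A] [Nonempty A]
    (LG LH LmG LmH : Set (List E)) (tick : E) (Sc Sfor Sfg : Set E)
    (Ac : E → Set A) (Suci : A → Set E) (P : A → List E → List E)
    (hLGpc : IsPrefixClosed LG) (hLGnil : ([] : List E) ∈ LG)
    (hLHsub : LH ⊆ LG) (hLHpc : IsPrefixClosed LH) (hLHnil : ([] : List E) ∈ LH)
    (htick : tick ∈ Sc) (hAcTick : Ac tick = Set.univ)
    (hAcne : ∀ σ ∈ Sc, (Ac σ).Nonempty)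
    (hSuci : ∀ i : A, Suci i ⊆ Scᶜ)
    (hLmG : LmG ⊆ LG) (hLmH : LmH ⊆ LH)
    (hfgC : Disjoint Sfg Sc) (hfgUC : Disjoint Sfg (⋃ i, Suci i))
    (hcover : ∀ e : E, e ∈ Sc ∪ (⋃ i, Suci i) ∪ Sfg)
    (hcomm : CommClosed LG LH Sfg) :
    (NetworkControllable LG LH (⋃ i, Suci i) Sfor tick ∧
        NetworkJointlyObservable LG LH Sc Ac P ∧
        LmH = LH ∩ LmG) ↔
      (Admissible LG LH Suci Sfor tick P (Sstar LG LH Sc Ac Suci P) ∧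
        {μ | InCL LG Sc Ac P (Sstar LG LH Sc Ac Suci P) μ} = LH ∧
        {μ | InCL LG Sc Ac P (Sstar LG LH Sc Ac Suci P) μ} ∩ LmG = LmH) := by
  constructor
  · rintro ⟨⟨hNCa, hNCb⟩, hNJO, hMk⟩
    have hLeq : {μ | InCL LG Sc Ac P (Sstar LG LH Sc Ac Suci P) μ} = LH := by
      apply Set.eq_of_subset_of_subset
      · intro μ hμ
        induction hμ with
        | nil => exact hLHnil
        | @snoc ν e hν hνeG hctl ih =>
          rcases hcover e with (he | he) | he
          · -- e controllable
            obtain ⟨i, hi⟩ := hAcne e he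
            have hS := hctl he i hi
            rcases hS with hS | hS
            · exact absurd he (hSuci i hS)
            · by_contra hne
              exact hS.2 ⟨he, hi, ν, ih, hνeG, hne, rfl⟩
          · -- e uncontrollable
            exact hNCa ν ih e he hνeG
          · -- e bookkeeping
            exact hcomm ν ih e he hνeG
      · intro μ hμ
        induction μ using List.reverseRecOn with
        | nil => exact InCL.nil
        | append_singleton ν e ih =>
          have hν : ν ∈ LH := hLHpc _ hμ ν ⟨[e], rfl⟩
          refine InCL.snoc (ih hν) (hLHsub hμ) ?_
          intro he i hi
          right
          refine ⟨⟨he, hi⟩, ?_⟩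
          rintro ⟨-, -, ρ, hρ, hρG, hρH, hP⟩
          exact hNJO ρ hρ e he hρG hρH i hi ν hμ hP
    refine ⟨?_, hLeq, by rw [hLeq, ← hMk]⟩
    intro i μ hμ
    constructor
    · intro σ hσ; exact Or.inl hσ
    · intro hno htG
      right
      refine ⟨⟨htick, by rw [hAcTick]; trivial⟩, ?_⟩
      rintro ⟨-, -, ρ, hρ, hρG, hρH, hP⟩
      have hμt : μ ++ [tick] ∈ LH := by
        by_contra hμt
        exact hno (hNCb μ hμ htG hμt)
      exact hNJO ρ hρ tick htick hρG hρH i (by rw [hAcTick]; trivial) μ hμt hP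
  · rintro ⟨hAdm, hLeq, hMk⟩
    have hLH_CL : ∀ μ ∈ LH, InCL LG Sc Ac P (Sstar LG LH Sc Ac Suci P) μ := by
      intro μ hμ; rw [← hLeq] at hμ; exact hμ
    have hCL_LH : ∀ {μ}, InCL LG Sc Ac P (Sstar LG LH Sc Ac Suci P) μ → μ ∈ LH := by
      intro μ h; rw [← hLeq]; exact h
    refine ⟨⟨?_, ?_⟩, ?_, by rw [← hMk, hLeq]⟩
    · -- NC (a)
      intro μ hμ σ hσ hG
      rcases Set.mem_iUnion.mp hσ with ⟨i, hi⟩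
      have hσnc : σ ∉ Sc := hSuci i hi
      exact hCL_LH (InCL.snoc (hLH_CL μ hμ) hG (fun hc => absurd hc hσnc))
    · -- NC (b)
      intro μ hμ htG htH
      by_contra hno
      push_neg at hno
      obtain ⟨i⟩ := ‹Nonempty A›
      have := (hAdm i μ hμ).2 (by push_neg; exact hno) htG
      rcases this with h | h
      · exact (hSuci i h) htick
      · exact h.2 ⟨htick, by rw [hAcTick]; trivial, μ, hμ, htG, htH, rfl⟩
    · -- NJO
      intro μ hμ σ hσ hG hH i hi ν hν hP
      have hνCL := hLH_CL _ hν
      have hctl := InCL_snoc_inv hνCL ν σ rfl hσ i hi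
      rcases hctl with h | h
      · exact (hSuci i h) hσ
      · exact h.2 ⟨hσ, hi, μ, hμ, hG, hH, hP⟩
end

section
/- Theorem 1, sufficiency: assume every event of E lies in Σc ∪ Σuc ∪ Σfg and that LH is communication-closed. If the specification is network controllable, network jointly observable, and LH is LmG-closed, then the canonical supervisor set γ* is admissible and satisfies L(γ*) = LH and Lm(γ*) = LmH. -/
universe u v

variable {E : Type u} {A : Type v}

/-- Theorem 1, sufficiency. -/
theorem dnnscp_sufficiency [Fintype A] [Nonempty A]
    (LG LH LmG LmH : Set (List E)) (tick : E) (Sc Sfor Sfg : Set E)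
    (Ac : E → Set A) (Suci : A → Set E) (P : A → List E → List E)
    (hLGpc : IsPrefixClosed LG) (hLGnil : ([] : List E) ∈ LG)
    (hLHsub : LH ⊆ LG) (hLHpc : IsPrefixClosed LH) (hLHnil : ([] : List E) ∈ LH)
    (htick : tick ∈ Sc) (hAcTick : Ac tick = Set.univ)
    (hAcne : ∀ σ ∈ Sc, (Ac σ).Nonempty)
    (hSuci : ∀ i : A, Suci i ⊆ Scᶜ)
    (hLmG : LmG ⊆ LG) (hLmH : LmH ⊆ LH)
    (hfgC : Disjoint Sfg Sc) (hfgUC : Disjoint Sfg (⋃ i, Suci i))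
    (hcover : ∀ e : E, e ∈ Sc ∪ (⋃ i, Suci i) ∪ Sfg)
    (hcomm : CommClosed LG LH Sfg)
    (hctrl : NetworkControllable LG LH (⋃ i, Suci i) Sfor tick)
    (hobs : NetworkJointlyObservable LG LH Sc Ac P)
    (hclosed : LmH = LH ∩ LmG) :
    Admissible LG LH Suci Sfor tick P (Sstar LG LH Sc Ac Suci P) ∧
      {μ | InCL LG Sc Ac P (Sstar LG LH Sc Ac Suci P) μ} = LH ∧
      {μ | InCL LG Sc Ac P (Sstar LG LH Sc Ac Suci P) μ} ∩ LmG = LmH := by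

  -- L(γ*) ⊆ LH
  have hsub : ∀ μ, InCL LG Sc Ac P (Sstar LG LH Sc Ac Suci P) μ → μ ∈ LH := by
    intro μ h
    induction h with
    | nil => exact hLHnil
    | @snoc μ e hμ hG hcond ih =>
      by_cases hc : e ∈ Sc
      · obtain ⟨i, hi⟩ := hAcne e hc
        have hs := hcond hc i hi
        rcases hs with huc | ⟨_, hbad⟩
        · exact absurd hc (hSuci i huc)
        · by_contra hnot
          exact hbad ⟨hc, hi, μ, ih, hG, hnot, rfl⟩
      · rcases hcover e with (hc' | huc) | hfg
        · exact absurd hc' hc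
        · exact hctrl.1 μ ih e huc hG
        · exact hcomm μ ih e hfg hG
  -- LH ⊆ L(γ*)
  have hsup : ∀ μ ∈ LH, InCL LG Sc Ac P (Sstar LG LH Sc Ac Suci P) μ := by
    intro μ
    induction μ using List.reverseRecOn with
    | nil => intro _; exact InCL.nil
    | append_singleton μ e ih =>
      intro hμe
      have hμ : μ ∈ LH := hLHpc _ hμe μ ⟨[e], rfl⟩
      refine InCL.snoc (ih hμ) (hLHsub hμe) ?_
      intro hc i hi
      right
      refine ⟨⟨hc, hi⟩, ?_⟩
      rintro ⟨-, -, ν, hν, hνG, hνH, hP⟩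
      exact hobs ν hν e hc hνG hνH i hi μ hμe hP
  have hLeq : {μ | InCL LG Sc Ac P (Sstar LG LH Sc Ac Suci P) μ} = LH :=
    Set.eq_of_subset_of_subset (fun μ h => hsub μ h) (fun μ h => hsup μ h)
  refine ⟨?_, hLeq, by rw [hLeq, hclosed]⟩
  intro i μ hμ
  constructor
  · intro σ hσ; exact Or.inl hσ
  · intro hnofor htickG
    right
    refine ⟨⟨htick, by rw [hAcTick]; trivial⟩, ?_⟩
    rintro ⟨-, -, ν, hν, hνG, hνH, hP⟩
    by_cases hμt : μ ++ [tick] ∈ LH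
    · exact hobs ν hν tick htick hνG hνH i (by rw [hAcTick]; trivial) μ hμt hP
    · exact hnofor (hctrl.2 μ hμ htickG hμt)
end

section
/- If the specification is network controllable and network jointly observable, then the canonical supervisor set γ* is admissible. -/
universe u v

variable {E : Type u} {A : Type v}

/-- Network controllability and network joint observability imply that the
canonical supervisor set `γ*` is admissible. -/
theorem canonical_supervisor_admissible [Fintype A] [Nonempty A]
    (LG LH : Set (List E)) (tick : E) (Sc Sfor : Set E)
    (Ac : E → Set A) (Suci : A → Set E) (P : A → List E → List E)
    (hLGpc : IsPrefixClosed LG) (hLGnil : ([] : List E) ∈ LG)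
    (hLHsub : LH ⊆ LG) (hLHpc : IsPrefixClosed LH) (hLHnil : ([] : List E) ∈ LH)
    (htick : tick ∈ Sc) (hAcTick : Ac tick = Set.univ)
    (hAcne : ∀ σ ∈ Sc, (Ac σ).Nonempty)
    (hSuci : ∀ i : A, Suci i ⊆ Scᶜ)
    (hctrl : NetworkControllable LG LH (⋃ i, Suci i) Sfor tick)
    (hobs : NetworkJointlyObservable LG LH Sc Ac P) :
    Admissible LG LH Suci Sfor tick P (Sstar LG LH Sc Ac Suci P) := by
  intro i μ hμ
  constructor
  · intro σ hσ
    exact Or.inl hσ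
  · intro hno htg
    have htH : μ ++ [tick] ∈ LH := by
      by_contra h
      obtain ⟨σ, hσf, hσH⟩ := hctrl.2 μ hμ htg h
      exact hno ⟨σ, hσf, hσH⟩
    right
    refine ⟨⟨htick, by rw [hAcTick]; trivial⟩, ?_⟩
    rintro ⟨-, -, ν, hν, hνG, hνH, hP⟩
    exact hobs ν hν tick htick hνG hνH i (by rw [hAcTick]; trivial) μ htH hP
end

section
/- If the specification is network jointly observable, then LH ⊆ L(γ*), i.e., every string of the specification language survives in the closed loop under the canonical supervisor set γ*. -/
universe u v

variable {E : Type u} {A : Type v}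

/-- Network joint observability implies `LH ⊆ L(γ*)`. -/
theorem spec_subset_closed_loop [Fintype A] [Nonempty A]
    (LG LH : Set (List E)) (tick : E) (Sc Sfor : Set E)
    (Ac : E → Set A) (Suci : A → Set E) (P : A → List E → List E)
    (hLGpc : IsPrefixClosed LG) (hLGnil : ([] : List E) ∈ LG)
    (hLHsub : LH ⊆ LG) (hLHpc : IsPrefixClosed LH) (hLHnil : ([] : List E) ∈ LH)
    (htick : tick ∈ Sc) (hAcTick : Ac tick = Set.univ)
    (hAcne : ∀ σ ∈ Sc, (Ac σ).Nonempty)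
    (hSuci : ∀ i : A, Suci i ⊆ Scᶜ)
    (hobs : NetworkJointlyObservable LG LH Sc Ac P) :
    LH ⊆ {μ | InCL LG Sc Ac P (Sstar LG LH Sc Ac Suci P) μ} := by
  intro s
  induction s using List.reverseRecOn with
  | nil => exact fun _ => InCL.nil
  | append_singleton μ e ih =>
    intro hs
    have hμ : μ ∈ LH := hLHpc _ hs _ ⟨[e], rfl⟩
    refine InCL.snoc (ih hμ) (hLHsub hs) ?_
    intro he i hi
    right
    refine ⟨⟨he, hi⟩, ?_⟩
    rintro ⟨-, -, ν, hν, hνG, hνnH, hP⟩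
    exact hobs ν hν e he hνG hνnH i hi μ hs hP
end

section
/- Assume every event of E lies in Σc ∪ Σuc ∪ Σfg, that LH is communication-closed, and that for all μ ∈ LH and σ ∈ Σuc with μσ ∈ LG, also μσ ∈ LH (the first condition of network controllability). Then L(γ*) ⊆ LH, i.e., the closed-loop language under the canonical supervisor set γ* is contained in the specification language. -/
universe u v

variable {E : Type u} {A : Type v}

/-- Under event coverage, communication-closedness of `LH`, and the first
network controllability condition, the closed loop under `γ*` is contained
in the specification: `L(γ*) ⊆ LH`. -/
theorem closed_loop_subset_spec [Fintype A] [Nonempty A]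
    (LG LH : Set (List E)) (tick : E) (Sc Sfor Sfg : Set E)
    (Ac : E → Set A) (Suci : A → Set E) (P : A → List E → List E)
    (hLGpc : IsPrefixClosed LG) (hLGnil : ([] : List E) ∈ LG)
    (hLHsub : LH ⊆ LG) (hLHpc : IsPrefixClosed LH) (hLHnil : ([] : List E) ∈ LH)
    (htick : tick ∈ Sc) (hAcTick : Ac tick = Set.univ)
    (hAcne : ∀ σ ∈ Sc, (Ac σ).Nonempty)
    (hSuci : ∀ i : A, Suci i ⊆ Scᶜ)
    (hfgC : Disjoint Sfg Sc) (hfgUC : Disjoint Sfg (⋃ i, Suci i))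
    (hcover : ∀ e : E, e ∈ Sc ∪ (⋃ i, Suci i) ∪ Sfg)
    (hcomm : CommClosed LG LH Sfg)
    (hctrl1 : ∀ μ ∈ LH, ∀ σ ∈ ⋃ i, Suci i, μ ++ [σ] ∈ LG → μ ++ [σ] ∈ LH) :
    {μ | InCL LG Sc Ac P (Sstar LG LH Sc Ac Suci P) μ} ⊆ LH := by
  intro μ hμ
  induction hμ with
  | nil => exact hLHnil
  | @snoc ν σ hcl hG hSup ih =>
    rcases hcover σ with (he | he) | he
    · -- e ∈ Sc
      obtain ⟨i, hi⟩ := hAcne σ he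
      have hmem := hSup he i hi
      rcases hmem with huc | ⟨_, hns⟩
      · exact absurd he (hSuci i huc)
      · by_contra hnot
        exact hns ⟨he, hi, ν, ih, hG, hnot, rfl⟩
    · exact hctrl1 ν ih σ he hG
    · exact hcomm ν ih σ he hG
end

section
/- If the specification is network jointly observable, then for every μ ∈ LH, every σ ∈ Σc with μσ ∈ LH, and every i ∈ Ac(σ), the canonical supervisor enables σ after observing P_i(μ), i.e., σ ∈ S*_i(P_i(μ)). -/
universe u v

variable {E : Type u} {A : Type v}

/-- Under network joint observability, the canonical supervisor enables every
controllable event that must be enabled: for `μ ∈ LH`, `σ ∈ Sc` with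
`μσ ∈ LH`, and `i ∈ Ac(σ)`, we have `σ ∈ S*_i(P_i(μ))`. -/
theorem canonical_supervisor_enables [Fintype A] [Nonempty A]
    (LG LH : Set (List E)) (tick : E) (Sc Sfor : Set E)
    (Ac : E → Set A) (Suci : A → Set E) (P : A → List E → List E)
    (hLGpc : IsPrefixClosed LG) (hLGnil : ([] : List E) ∈ LG)
    (hLHsub : LH ⊆ LG) (hLHpc : IsPrefixClosed LH) (hLHnil : ([] : List E) ∈ LH)
    (htick : tick ∈ Sc) (hAcTick : Ac tick = Set.univ)
    (hAcne : ∀ σ ∈ Sc, (Ac σ).Nonempty)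
    (hSuci : ∀ i : A, Suci i ⊆ Scᶜ)
    (hobs : NetworkJointlyObservable LG LH Sc Ac P) :
    ∀ μ ∈ LH, ∀ σ ∈ Sc, μ ++ [σ] ∈ LH →
      ∀ i ∈ Ac σ, σ ∈ Sstar LG LH Sc Ac Suci P i (P i μ) := by
  intro μ hμ σ hσ hμσ i hi
  right
  refine ⟨⟨hσ, hi⟩, ?_⟩
  rintro ⟨-, -, μ', hμ', hG, hnH, hP⟩
  exact hobs μ' hμ' σ hσ hG hnH i hi μ hμσ hP
end

section
/- Theorem 1, necessity of network joint observability: if the closed-loop language under the canonical supervisor set equals the specification language, L(γ*) = LH, then the specification is network jointly observable. -/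
universe u v

variable {E : Type u} {A : Type v}

/-- Theorem 1, necessity of network joint observability. -/
theorem necessity_joint_observability [Fintype A] [Nonempty A]
    (LG LH : Set (List E)) (tick : E) (Sc Sfor : Set E)
    (Ac : E → Set A) (Suci : A → Set E) (P : A → List E → List E)
    (hLGpc : IsPrefixClosed LG) (hLGnil : ([] : List E) ∈ LG)
    (hLHsub : LH ⊆ LG) (hLHpc : IsPrefixClosed LH) (hLHnil : ([] : List E) ∈ LH)
    (htick : tick ∈ Sc) (hAcTick : Ac tick = Set.univ)
    (hAcne : ∀ σ ∈ Sc, (Ac σ).Nonempty)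
    (hSuci : ∀ i : A, Suci i ⊆ Scᶜ)
    (heq : {μ | InCL LG Sc Ac P (Sstar LG LH Sc Ac Suci P) μ} = LH) :
    NetworkJointlyObservable LG LH Sc Ac P := by
  intro μ hμ σ hσ hμσG hμσH i hi ν hνσ hP
  have hIn : InCL LG Sc Ac P (Sstar LG LH Sc Ac Suci P) (ν ++ [σ]) := by
    rw [Set.ext_iff] at heq
    exact (heq (ν ++ [σ])).mpr hνσ
  generalize hgen : ν ++ [σ] = s at hIn
  cases hIn with
  | nil => exact absurd hgen (by simp)
  | snoc hν hG hcond =>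
    rename_i μ' e
    have h := List.append_inj' hgen rfl
    have h2 := List.singleton_injective h.2
    have hs := hcond (h2 ▸ hσ) i (h2 ▸ hi)
    rcases hs with hA | hA
    · exact (hSuci i hA) (h2 ▸ hσ)
    · exact hA.2 ⟨h2 ▸ hσ, h2 ▸ hi, μ, hμ, h2 ▸ hμσG, h2 ▸ hμσH, by rw [hP, h.1]⟩
end

section
/- Theorem 1, necessity of the first network controllability condition: if the closed-loop language under the canonical supervisor set equals the specification language, L(γ*) = LH, then for all μ ∈ LH and all σ ∈ Σuc with μσ ∈ LG, also μσ ∈ LH (i.e., LH·Σuc ∩ LG ⊆ LH). -/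
universe u v

variable {E : Type u} {A : Type v}

/-- Theorem 1, necessity of the first network controllability condition. -/
theorem necessity_controllability_one [Fintype A] [Nonempty A]
    (LG LH : Set (List E)) (tick : E) (Sc Sfor : Set E)
    (Ac : E → Set A) (Suci : A → Set E) (P : A → List E → List E)
    (hLGpc : IsPrefixClosed LG) (hLGnil : ([] : List E) ∈ LG)
    (hLHsub : LH ⊆ LG) (hLHpc : IsPrefixClosed LH) (hLHnil : ([] : List E) ∈ LH)
    (htick : tick ∈ Sc) (hAcTick : Ac tick = Set.univ)
    (hAcne : ∀ σ ∈ Sc, (Ac σ).Nonempty)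
    (hSuci : ∀ i : A, Suci i ⊆ Scᶜ)
    (heq : {μ | InCL LG Sc Ac P (Sstar LG LH Sc Ac Suci P) μ} = LH) :
    ∀ μ ∈ LH, ∀ σ ∈ ⋃ i, Suci i, μ ++ [σ] ∈ LG → μ ++ [σ] ∈ LH := by
  intro μ hμ σ hσ hG
  obtain ⟨_, ⟨i, rfl⟩, hi⟩ := hσ
  have hnc : σ ∉ Sc := hSuci i hi
  have hμcl : InCL LG Sc Ac P (Sstar LG LH Sc Ac Suci P) μ := by
    rw [← heq] at hμ; exact hμ
  have : μ ++ [σ] ∈ {μ | InCL LG Sc Ac P (Sstar LG LH Sc Ac Suci P) μ} :=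
    InCL.snoc hμcl hG (fun h => absurd h hnc)
  rwa [heq] at this
end

section
/- Theorem 1, necessity of the second network controllability condition: if the canonical supervisor set γ* is admissible, then for every μ ∈ LH with μ·tick ∈ LG \ LH there exists an enforceable event σ ∈ Σfor with μσ ∈ LH. -/
universe u v

variable {E : Type u} {A : Type v}

/-- Theorem 1, necessity of the second network controllability condition. -/
theorem necessity_controllability_two [Fintype A] [Nonempty A]
    (LG LH : Set (List E)) (tick : E) (Sc Sfor : Set E)
    (Ac : E → Set A) (Suci : A → Set E) (P : A → List E → List E)
    (hLGpc : IsPrefixClosed LG) (hLGnil : ([] : List E) ∈ LG)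
    (hLHsub : LH ⊆ LG) (hLHpc : IsPrefixClosed LH) (hLHnil : ([] : List E) ∈ LH)
    (htick : tick ∈ Sc) (hAcTick : Ac tick = Set.univ)
    (hAcne : ∀ σ ∈ Sc, (Ac σ).Nonempty)
    (hSuci : ∀ i : A, Suci i ⊆ Scᶜ)
    (hadm : Admissible LG LH Suci Sfor tick P (Sstar LG LH Sc Ac Suci P)) :
    ∀ μ ∈ LH, μ ++ [tick] ∈ LG → μ ++ [tick] ∉ LH →
      ∃ σ ∈ Sfor, μ ++ [σ] ∈ LH := by
  intro μ hμ hG hnH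
  by_contra hno
  obtain ⟨i⟩ := ‹Nonempty A›
  have h := (hadm i μ hμ).2 hno hG
  rcases h with h | h
  · exact hSuci i h htick
  · exact h.2 ⟨htick, by rw [hAcTick]; trivial, μ, hμ, hG, hnH, rfl⟩
end

section
/- Proposition 1: for the communication automaton G̃ constructed from the plant G and the communication channels, the projection of its language onto plant events equals the plant language, i.e., ψ(L(G̃)) = L(G). -/
open scoped Classical

/-- Plant events: the tick event or an ordinary event of `S`. -/
inductive PEv (S : Type) where
  | tick : PEv S
  | ev : S → PEv S

/-- Events of the communication automaton `G̃`: plant events, delivery events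
`f_ij(σ)` and loss events `g_ij(d)`. -/
inductive CEv (S : Type) (n : ℕ) where
  | tick : CEv S n
  | ev : S → CEv S n
  | del : Fin n → Fin n → S → CEv S n
  | loss : Fin n → Fin n → ℕ → CEv S n

/-- A configuration of one communication channel: a queue of pairs
(event, number of ticks since it was enqueued). -/
abbrev Chan (S : Type) := List (S × ℕ)

/-- A global configuration of all channels. -/
abbrev Cfg (S : Type) (n : ℕ) := Fin n → Fin n → Chan S

/-- The all-empty configuration. -/
def emptyCfg (S : Type) (n : ℕ) : Cfg S n := fun _ _ => []

/-- The `TIME` operator: increments every counter; defined iff every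
incremented counter is still at most the delay bound `N i j`. -/
noncomputable def timeOp {S : Type} {n : ℕ} (N : Fin n → Fin n → ℕ)
    (θ : Cfg S n) : Option (Cfg S n) :=
  if ∀ i j : Fin n, ∀ p ∈ θ i j, p.2 + 1 ≤ N i j then
    some fun i j => (θ i j).map fun p => (p.1, p.2 + 1)
  else none

/-- The `IN` operator: when `σ` occurs in the plant, append `(σ, 0)` to every
channel `CH_ij` with `σ ∈ Σij`. -/
noncomputable def inOp {S : Type} {n : ℕ} (Sij : Fin n → Fin n → Set S)
    (θ : Cfg S n) (σ : S) : Cfg S n :=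
  fun i j => if σ ∈ Sij i j then θ i j ++ [(σ, 0)] else θ i j

/-- The `OUT_ij` operator: defined iff channel `CH_ij` is nonempty and its
first entry carries the event `σ`; removes that first entry. -/
noncomputable def outOp {S : Type} {n : ℕ} (i j : Fin n) (θ : Cfg S n)
    (σ : S) : Option (Cfg S n) :=
  match θ i j with
  | [] => none
  | p :: rest =>
      if p.1 = σ then
        some fun i' j' => if i' = i ∧ j' = j then rest else θ i' j'
      else none

/-- The `LOSS_ij` operator: defined iff `1 ≤ d`, channel `CH_ij` has length at
least `d`, and the event of its `d`-th entry is losable; removes that entry. -/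
noncomputable def lossOp {S : Type} {n : ℕ} (SLij : Fin n → Fin n → Set S)
    (i j : Fin n) (θ : Cfg S n) (d : ℕ) : Option (Cfg S n) :=
  if 1 ≤ d ∧ d ≤ (θ i j).length ∧ ∃ p ∈ (θ i j)[d - 1]?, p.1 ∈ SLij i j then
    some fun i' j' =>
      if i' = i ∧ j' = j then (θ i j).take (d - 1) ++ (θ i j).drop d
      else θ i' j'
  else none

/-- One step of the communication automaton `G̃`. -/
noncomputable def cstep {Q S : Type} {n : ℕ} (δ : Q → PEv S → Option Q)
    (N : Fin n → Fin n → ℕ) (Sij SLij : Fin n → Fin n → Set S) :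
    Q × Cfg S n → CEv S n → Option (Q × Cfg S n)
  | (q, θ), CEv.tick =>
      match δ q PEv.tick, timeOp N θ with
      | some q', some θ' => some (q', θ')
      | _, _ => none
  | (q, θ), CEv.ev σ => (δ q (PEv.ev σ)).map fun q' => (q', inOp Sij θ σ)
  | (q, θ), CEv.del i j σ =>
      if σ ∈ Sij i j then (outOp i j θ σ).map fun θ' => (q, θ') else none
  | (q, θ), CEv.loss i j d => (lossOp SLij i j θ d).map fun θ' => (q, θ')

/-- The run of `G̃` on a string of events. -/
noncomputable def crun {Q S : Type} {n : ℕ} (δ : Q → PEv S → Option Q)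
    (N : Fin n → Fin n → ℕ) (Sij SLij : Fin n → Fin n → Set S) :
    Q × Cfg S n → List (CEv S n) → Option (Q × Cfg S n)
  | x, [] => some x
  | x, e :: μ => (cstep δ N Sij SLij x e).bind fun x' => crun δ N Sij SLij x' μ

/-- The run of the plant `G` on a string of plant events. -/
def prun {Q S : Type} (δ : Q → PEv S → Option Q) :
    Q → List (PEv S) → Option Q
  | q, [] => some q
  | q, e :: s => (δ q e).bind fun q' => prun δ q' s

/-- The language `L(G)` of the plant. -/
def plantLang {Q S : Type} (δ : Q → PEv S → Option Q) (q0 : Q) :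
    Set (List (PEv S)) :=
  {s | (prun δ q0 s).isSome}

/-- The language `L(G̃)` of the communication automaton. -/
noncomputable def commLang {Q S : Type} {n : ℕ} (δ : Q → PEv S → Option Q)
    (q0 : Q) (N : Fin n → Fin n → ℕ) (Sij SLij : Fin n → Fin n → Set S) :
    Set (List (CEv S n)) :=
  {μ | (crun δ N Sij SLij (q0, emptyCfg S n) μ).isSome}

/-- The projection `ψ` erasing delivery and loss events. -/
def proj {S : Type} {n : ℕ} : List (CEv S n) → List (PEv S) :=
  List.filterMap fun e =>
    match e with
    | CEv.tick => some PEv.tick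
    | CEv.ev σ => some (PEv.ev σ)
    | CEv.del _ _ _ => none
    | CEv.loss _ _ _ => none


section Aux

variable {Q S : Type} {n : ℕ} (δ : Q → PEv S → Option Q)
    (N : Fin n → Fin n → ℕ) (Sij SLij : Fin n → Fin n → Set S)

lemma crun_append (x : Q × Cfg S n) (μ₁ μ₂ : List (CEv S n)) :
    crun δ N Sij SLij x (μ₁ ++ μ₂) =
      (crun δ N Sij SLij x μ₁).bind fun x' => crun δ N Sij SLij x' μ₂ := by
  induction μ₁ generalizing x with
  | nil => simp [crun]
  | cons e μ ih =>
    simp only [List.cons_append, crun]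
    cases cstep δ N Sij SLij x e with
    | none => simp
    | some x' => simp [ih]


lemma proj_nil : proj (n := n) ([] : List (CEv S n)) = [] := rfl

lemma proj_cons_tick (μ : List (CEv S n)) :
    proj (CEv.tick :: μ) = PEv.tick :: proj μ := rfl

lemma proj_cons_ev (σ : S) (μ : List (CEv S n)) :
    proj (CEv.ev σ :: μ) = PEv.ev σ :: proj μ := rfl

lemma proj_cons_del (i j : Fin n) (σ : S) (μ : List (CEv S n)) :
    proj (CEv.del i j σ :: μ) = proj μ := rfl

lemma proj_cons_loss (i j : Fin n) (d : ℕ) (μ : List (CEv S n)) :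
    proj (CEv.loss i j d :: μ) = proj μ := rfl

lemma proj_append (μ₁ μ₂ : List (CEv S n)) :
    proj (μ₁ ++ μ₂) = proj μ₁ ++ proj μ₂ :=
  List.filterMap_append

lemma crun_proj (μ : List (CEv S n)) : ∀ q θ q' θ',
    crun δ N Sij SLij (q, θ) μ = some (q', θ') →
    prun δ q (proj μ) = some q' := by
  induction μ with
  | nil =>
    intro q θ q' θ' h
    simp [crun] at h
    simp [proj, prun, h.1]
  | cons e μ ih =>
    intro q θ q' θ' h
    simp only [crun] at h
    cases e with
    | tick =>
      simp only [cstep] at h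
      rcases hδ : δ q PEv.tick with _ | q1 <;> rw [hδ] at h
      · simp at h
      rcases ht : timeOp N θ with _ | θ1 <;> rw [ht] at h
      · simp at h
      simp only [Option.bind_some] at h
      simp only [proj_cons_tick, prun, hδ, Option.bind_some]
      exact ih q1 θ1 q' θ' h
    | ev σ =>
      simp only [cstep] at h
      rcases hδ : δ q (PEv.ev σ) with _ | q1 <;> rw [hδ] at h
      · simp at h
      simp only [Option.map_some, Option.bind_some] at h
      simp only [proj_cons_ev, prun, hδ, Option.bind_some]
      exact ih q1 _ q' θ' h
    | del i j σ =>
      simp only [cstep] at h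
      split at h
      · rcases ho : outOp i j θ σ with _ | θ1 <;> rw [ho] at h
        · simp at h
        simp only [Option.map_some, Option.bind_some] at h
        have := ih q θ1 q' θ' h
        rwa [proj_cons_del]
      · simp at h
    | loss i j d =>
      simp only [cstep] at h
      rcases hl : lossOp SLij i j θ d with _ | θ1 <;> rw [hl] at h
      · simp at h
      simp only [Option.map_some, Option.bind_some] at h
      have := ih q θ1 q' θ' h
      rwa [proj_cons_loss]

noncomputable def flushList (Sij : Fin n → Fin n → Set S) (σ : S)
    (L : List (Fin n × Fin n)) : List (CEv S n) :=
  L.filterMap fun p => if σ ∈ Sij p.1 p.2 then some (CEv.del p.1 p.2 σ) else none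

noncomputable def cfgOf (Sij : Fin n → Fin n → Set S) (σ : S)
    (L : List (Fin n × Fin n)) : Cfg S n :=
  fun i j => if (i, j) ∈ L ∧ σ ∈ Sij i j then [(σ, 0)] else []

lemma proj_flushList (σ : S) (L : List (Fin n × Fin n)) :
    proj (n := n) (flushList Sij σ L) = [] := by
  induction L with
  | nil => rfl
  | cons p L ih =>
    by_cases hσ : σ ∈ Sij p.1 p.2
    · have h1 : flushList Sij σ (p :: L) =
          CEv.del p.1 p.2 σ :: flushList Sij σ L := by
        simp [flushList, hσ]
      rw [h1, proj_cons_del]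
      exact ih
    · have h1 : flushList Sij σ (p :: L) = flushList Sij σ L := by
        simp [flushList, hσ]
      rw [h1]
      exact ih

lemma flush (σ : S) (L : List (Fin n × Fin n)) (hnd : L.Nodup) (q : Q) :
    crun δ N Sij SLij (q, cfgOf Sij σ L) (flushList Sij σ L) =
      some (q, emptyCfg S n) := by
  induction L with
  | nil =>
    have : cfgOf Sij σ ([] : List (Fin n × Fin n)) = emptyCfg S n := by
      funext i j; simp [cfgOf, emptyCfg]
    simp [crun, this, flushList]
  | cons p L ih =>
    obtain ⟨hp, hnd'⟩ := List.nodup_cons.mp hnd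
    obtain ⟨i, j⟩ := p
    by_cases hσ : σ ∈ Sij i j
    · have hfl : flushList Sij σ ((i, j) :: L) =
          CEv.del i j σ :: flushList Sij σ L := by
        simp [flushList, hσ]
      rw [hfl]
      simp only [crun]
      have hθ : cfgOf Sij σ ((i, j) :: L) i j = (σ, 0) :: [] := by
        simp [cfgOf, hσ]
      have hstep : cstep δ N Sij SLij (q, cfgOf Sij σ ((i, j) :: L))
          (CEv.del i j σ) = some (q, cfgOf Sij σ L) := by
        simp only [cstep, hσ, if_pos, outOp, hθ]
        simp only [if_pos rfl, Option.map_some]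
        refine congrArg (fun c => some (q, c)) ?_
        funext i' j'
        by_cases hij : i' = i ∧ j' = j
        · obtain ⟨rfl, rfl⟩ := hij
          simp [cfgOf, hp]
        · have hne : ((i', j') : Fin n × Fin n) ≠ (i, j) := by
            intro hcon
            exact hij ⟨congrArg Prod.fst hcon, congrArg Prod.snd hcon⟩
          simp only [if_neg hij, cfgOf, List.mem_cons, hne, false_or]
      rw [hstep]
      simpa using ih hnd'
    · have hfl : flushList Sij σ ((i, j) :: L) = flushList Sij σ L := by
        simp [flushList, hσ]
      have hcfg : cfgOf Sij σ ((i, j) :: L) = cfgOf Sij σ L := by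
        funext i' j'
        simp only [cfgOf, List.mem_cons]
        by_cases hij : ((i', j') : Fin n × Fin n) = (i, j)
        · obtain ⟨rfl, rfl⟩ : i' = i ∧ j' = j :=
            ⟨congrArg Prod.fst hij, congrArg Prod.snd hij⟩
          simp [hσ]
        · simp [hij]
      rw [hfl, hcfg]
      exact ih hnd'

lemma embed (s : List (PEv S)) : ∀ q q', prun δ q s = some q' →
    ∃ μ, proj μ = s ∧ crun δ N Sij SLij (q, emptyCfg S n) μ =
      some (q', emptyCfg S n) := by
  induction s with
  | nil =>
    intro q q' h
    simp [prun] at h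
    exact ⟨[], rfl, by simp [crun, h]⟩
  | cons e s ih =>
    intro q q' h
    simp only [prun] at h
    rcases hδ : δ q e with _ | q1 <;> rw [hδ] at h
    · simp at h
    simp only [Option.bind_some] at h
    obtain ⟨μ, hμ, hrun⟩ := ih q1 q' h
    cases e with
    | tick =>
      refine ⟨CEv.tick :: μ, by rw [proj_cons_tick, hμ], ?_⟩
      simp only [crun]
      have ht : timeOp N (emptyCfg S n) = some (emptyCfg S n) := by
        have hc : ∀ i j : Fin n, ∀ p ∈ (emptyCfg S n) i j, p.2 + 1 ≤ N i j := by
          intro i j p hp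
          simp [emptyCfg] at hp
        simp only [timeOp, if_pos hc]
        congr 1
      simp only [cstep, hδ, ht, Option.bind_some]
      exact hrun
    | ev σ =>
      classical
      set L : List (Fin n × Fin n) :=
        (List.finRange n) ×ˢ (List.finRange n) with hL
      refine ⟨CEv.ev σ :: (flushList Sij σ L ++ μ), ?_, ?_⟩
      · rw [proj_cons_ev, proj_append, proj_flushList, hμ]
        rfl
      · simp only [crun, cstep, hδ, Option.map_some, Option.bind_some]
        have hin : inOp Sij (emptyCfg S n) σ = cfgOf Sij σ L := by
          funext i j
          have hmem : ((i, j) : Fin n × Fin n) ∈ L := by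
            simp [hL, List.mem_product, List.mem_finRange]
          simp [inOp, cfgOf, emptyCfg, hmem]
        have hnd : L.Nodup :=
          List.Nodup.product (List.nodup_finRange n) (List.nodup_finRange n)
        rw [hin, crun_append, flush δ N Sij SLij σ L hnd q1]
        simpa using hrun

end Aux

/-- Proposition 1: `ψ(L(G̃)) = L(G)`. -/
theorem proj_commLang_eq_plantLang {Q S : Type} {n : ℕ}
    (δ : Q → PEv S → Option Q) (q0 : Q) (N : Fin n → Fin n → ℕ)
    (Sij SLij : Fin n → Fin n → Set S)
    (hL : ∀ i j : Fin n, SLij i j ⊆ Sij i j) :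
    proj '' commLang δ q0 N Sij SLij = plantLang δ q0 := by
  ext s
  constructor
  · rintro ⟨μ, hμ, rfl⟩
    simp only [commLang, Set.mem_setOf_eq] at hμ
    rcases hx : crun δ N Sij SLij (q0, emptyCfg S n) μ with _ | ⟨q', θ'⟩
    · rw [hx] at hμ; simp at hμ
    have := crun_proj δ N Sij SLij μ q0 (emptyCfg S n) q' θ' hx
    simp [plantLang, this]
  · intro hs
    simp only [plantLang, Set.mem_setOf_eq] at hs
    rcases hq : prun δ q0 s with _ | q'
    · rw [hq] at hs; simp at hs
    obtain ⟨μ, hμ, hrun⟩ := embed δ N Sij SLij s q0 q' hq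
    exact ⟨μ, by simp [commLang, hrun], hμ⟩
end
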